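/- arXiv:2310.09961 — 2 statements merged into one kernel-verified Lean document; each statement's English description precedes it below -/
import Mathlib

section
/- (Additivity of restricted contributions.) If X and Y are independent random vectors, then L^r_T(X) + L^r_T(Y) = L^r_T(X, Y), where L^r_T(Z) = Var(T) − inf over additive square-integrable predictors h(Z) = Σ h_i(Z_i) of Var(T − h(Z)). -/
open MeasureTheory ProbabilityTheory

/-- The set of additive (GAM) square-integrable predictors built from the family of
features `Z i`. -/
def addPreds {Ω ι : Type*} {_ : MeasurableSpace Ω} [Fintype ι] (μ : Measure Ω)
    (Z : ι → Ω → ℝ) : Set (Ω → ℝ) :=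
  {h | ∃ f : ι → ℝ → ℝ, (∀ i, Measurable (f i) ∧ MemLp (fun ω => f i (Z i ω)) 2 μ) ∧
    h = fun ω => ∑ i, f i (Z i ω)}

/-- The restricted (GAM) variance reduction
`L^r_T(Z) = Var(T) - inf { Var(T - h) : h additive predictor from Z }`. -/
noncomputable def Lr {Ω ι : Type*} {_ : MeasurableSpace Ω} [Fintype ι] (μ : Measure Ω)
    (T : Ω → ℝ) (Z : ι → Ω → ℝ) : ℝ :=
  ProbabilityTheory.variance T μ -
    sInf ((fun h => ProbabilityTheory.variance (fun ω => T ω - h ω) μ) '' addPreds μ Z)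

/-!
If `F` and `G` are independent and square-integrable then `Cov(F, G) = 0`, so expanding variances
gives `Var(T - (F + G)) = Var(T - F) + Var(T - G) - Var(T)`. The additive predictors of `(X, Y)` are
exactly the sums `F + G` of additive predictors of `X` and of `Y`, and any two such are independent
functions of `X` and `Y`. Hence the residual variances of `(X, Y)` form the Minkowski sum of those of
`X` and of `Y`, shifted by `-Var(T)`, and the infimum of a Minkowski sum is the sum of the infima.
-/

open scoped Pointwise

section

variable {Ω : Type*} {mΩ : MeasurableSpace Ω} {μ : Measure Ω}

theorem variance_sub_add_of_indepFun [IsFiniteMeasure μ] {T F G : Ω → ℝ}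
    (hT : MemLp T 2 μ) (hF : MemLp F 2 μ) (hG : MemLp G 2 μ) (hFG : IndepFun F G μ) :
    Var[fun ω => T ω - (F + G) ω; μ]
      = Var[fun ω => T ω - F ω; μ] + Var[fun ω => T ω - G ω; μ] - Var[T; μ] := by
  rw [variance_fun_sub hT (hF.add hG), variance_fun_sub hT hF, variance_fun_sub hT hG,
    covariance_add_right hT hF hG, hFG.variance_add hF hG]
  ring

variable {ι κ : Type*} [Fintype ι] [Fintype κ]

theorem zero_mem_addPreds (Z : ι → Ω → ℝ) : 0 ∈ addPreds μ Z :=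
  ⟨fun _ _ => 0, fun _ => ⟨measurable_const, MemLp.zero'⟩, by ext; simp⟩

theorem memLp_of_mem_addPreds {Z : ι → Ω → ℝ} {h : Ω → ℝ} (hh : h ∈ addPreds μ Z) :
    MemLp h 2 μ := by
  obtain ⟨f, hf, rfl⟩ := hh
  exact memLp_finsetSum Finset.univ fun i _ => (hf i).2

theorem exists_measurable_comp_of_mem_addPreds {Z : ι → Ω → ℝ} {h : Ω → ℝ}
    (hh : h ∈ addPreds μ Z) :
    ∃ φ : (ι → ℝ) → ℝ, Measurable φ ∧ h = φ ∘ fun ω i => Z i ω := by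
  obtain ⟨f, hf, rfl⟩ := hh
  exact ⟨fun z => ∑ i, f i (z i),
    Finset.measurable_sum _ fun i _ => (hf i).1.comp (measurable_pi_apply i), rfl⟩

theorem ProbabilityTheory.IndepFun.of_mem_addPreds {X : ι → Ω → ℝ} {Y : κ → Ω → ℝ}
    (hXY : IndepFun (fun ω i => X i ω) (fun ω j => Y j ω) μ) {F G : Ω → ℝ}
    (hF : F ∈ addPreds μ X) (hG : G ∈ addPreds μ Y) : IndepFun F G μ := by
  obtain ⟨φ, hφ, rfl⟩ := exists_measurable_comp_of_mem_addPreds hF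
  obtain ⟨ψ, hψ, rfl⟩ := exists_measurable_comp_of_mem_addPreds hG
  exact hXY.comp hφ hψ

theorem addPreds_sum_elim (X : ι → Ω → ℝ) (Y : κ → Ω → ℝ) :
    addPreds μ (Sum.elim X Y) = addPreds μ X + addPreds μ Y := by
  ext h
  constructor
  · rintro ⟨f, hf, rfl⟩
    refine ⟨_, ⟨fun i => f (.inl i), fun i => hf (.inl i), rfl⟩,
      _, ⟨fun j => f (.inr j), fun j => hf (.inr j), rfl⟩, ?_⟩
    ext ω
    simp [Fintype.sum_sum_type]
  · rintro ⟨_, ⟨f, hf, rfl⟩, _, ⟨g, hg, rfl⟩, rfl⟩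
    refine ⟨Sum.elim f g, Sum.rec hf hg, ?_⟩
    ext ω
    simp [Fintype.sum_sum_type]

def residualVariances (μ : Measure Ω) (T : Ω → ℝ) (Z : ι → Ω → ℝ) : Set ℝ :=
  (fun h => Var[fun ω => T ω - h ω; μ]) '' addPreds μ Z

theorem Lr_eq_variance_sub_sInf (T : Ω → ℝ) (Z : ι → Ω → ℝ) :
    Lr μ T Z = Var[T; μ] - sInf (residualVariances μ T Z) := rfl

theorem residualVariances_nonempty (T : Ω → ℝ) (Z : ι → Ω → ℝ) :
    (residualVariances μ T Z).Nonempty :=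
  ⟨_, Set.mem_image_of_mem _ (zero_mem_addPreds Z)⟩

theorem bddBelow_residualVariances (T : Ω → ℝ) (Z : ι → Ω → ℝ) :
    BddBelow (residualVariances μ T Z) :=
  ⟨0, by rintro _ ⟨h, -, rfl⟩; exact variance_nonneg _ μ⟩

theorem residualVariances_sum_elim [IsFiniteMeasure μ] {T : Ω → ℝ} (hT : MemLp T 2 μ)
    {X : ι → Ω → ℝ} {Y : κ → Ω → ℝ}
    (hXY : IndepFun (fun ω i => X i ω) (fun ω j => Y j ω) μ) :
    residualVariances μ T (Sum.elim X Y)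
      = residualVariances μ T X + residualVariances μ T Y - {Var[T; μ]} := by
  have key {F G : Ω → ℝ} (hF : F ∈ addPreds μ X) (hG : G ∈ addPreds μ Y) :=
    variance_sub_add_of_indepFun hT (memLp_of_mem_addPreds hF) (memLp_of_mem_addPreds hG)
      (hXY.of_mem_addPreds hF hG)
  rw [residualVariances, addPreds_sum_elim]
  ext v
  constructor
  · rintro ⟨_, ⟨F, hF, G, hG, rfl⟩, rfl⟩
    exact ⟨_, ⟨_, ⟨F, hF, rfl⟩, _, ⟨G, hG, rfl⟩, rfl⟩, _, rfl, (key hF hG).symm⟩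
  · rintro ⟨_, ⟨_, ⟨F, hF, rfl⟩, _, ⟨G, hG, rfl⟩, rfl⟩, _, rfl, rfl⟩
    exact ⟨F + G, ⟨F, hF, G, hG, rfl⟩, key hF hG⟩

end

theorem restricted_variance_reduction_additive_of_indep_general
    {Ω : Type*} {m0 : MeasurableSpace Ω} (μ : Measure Ω) [IsProbabilityMeasure μ]
    {n m : ℕ} (X : Fin n → Ω → ℝ) (Y : Fin m → Ω → ℝ)
    (hindep : IndepFun (fun ω i => X i ω) (fun ω j => Y j ω) μ)
    (T : Ω → ℝ) (hT : MemLp T 2 μ) :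
    Lr μ T X + Lr μ T Y = Lr μ T (Sum.elim X Y) := by
  simp only [Lr_eq_variance_sub_sInf]
  rw [residualVariances_sum_elim hT hindep,
    csInf_sub ((residualVariances_nonempty T X).add (residualVariances_nonempty T Y))
      ((bddBelow_residualVariances T X).add (bddBelow_residualVariances T Y))
      (Set.singleton_nonempty _) bddAbove_singleton,
    csInf_add (residualVariances_nonempty T X) (bddBelow_residualVariances T X)
      (residualVariances_nonempty T Y) (bddBelow_residualVariances T Y), csSup_singleton]
  ring

/-- Additivity of restricted contributions: if the random vectors `X` and `Y` are
independent, then `L^r_T(X) + L^r_T(Y) = L^r_T(X, Y)`. -/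
theorem restricted_variance_reduction_additive_of_indep
    {Ω : Type*} {m0 : MeasurableSpace Ω} (μ : Measure Ω) [IsProbabilityMeasure μ]
    {n m : ℕ} (X : Fin n → Ω → ℝ) (Y : Fin m → Ω → ℝ)
    (hX : ∀ i, Measurable (X i)) (hY : ∀ j, Measurable (Y j))
    (hindep : IndepFun (fun ω i => X i ω) (fun ω j => Y j ω) μ)
    (T : Ω → ℝ) (hT : MemLp T 2 μ) :
    Lr μ T X + Lr μ T Y = Lr μ T (Sum.elim X Y) :=
  restricted_variance_reduction_additive_of_indep_general (m0 := m0) μ X Y hindep T hT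
end

section
/- (Upper bound on restricted interaction.) Suppose the restricted conditional expectation E^r[T | X₁,…,Xₙ, Y₁,…,Y_m] decomposes as F_X(X) + F_Y(Y) with Cov(F_X(X), F_Y(Y)) finite, where F_X is additive in the Xᵢ and F_Y additive in the Y_j. Then W^r_T(X; Y) := L^r_T(X, Y) − L^r_T(X) − L^r_T(Y) ≤ −2 Cov(F_X(X), F_Y(Y)). In particular, if Cov(F_X(X), F_Y(Y)) ≥ 0 then the interaction W^r_T(X; Y) is non-positive. -/
/-
`F_X` and `F_Y` are feasible additive predictors from `X` and from `Y`, so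
`L^r_T(X) ≥ Var T - Var(T - F_X)` and likewise for `Y`, while `F_X + F_Y` is optimal for `(X, Y)`.
Expanding variances bilinearly, `Var(T - F_X) + Var(T - F_Y) - Var T - Var(T - F_X - F_Y)`
equals `-2 Cov(F_X, F_Y)`, which is exactly the bound on `W^r_T(X; Y)`.
-/

open MeasureTheory ProbabilityTheory

/-- Covariance of two real random variables. -/
noncomputable def cov {Ω : Type*} {_ : MeasurableSpace Ω} (μ : Measure Ω) (f g : Ω → ℝ) : ℝ :=
  ∫ ω, (f ω - ∫ x, f x ∂μ) * (g ω - ∫ x, g x ∂μ) ∂μ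

lemma memLp_two_of_mem_addPreds {Ω ι : Type*} {_ : MeasurableSpace Ω} [Fintype ι]
    {μ : Measure Ω} {Z : ι → Ω → ℝ} {F : Ω → ℝ} (hF : F ∈ addPreds μ Z) : MemLp F 2 μ := by
  obtain ⟨f, hf, rfl⟩ := hF
  exact memLp_finsetSum Finset.univ fun i _ ↦ (hf i).2

lemma variance_sub_variance_sub_le_Lr {Ω ι : Type*} {_ : MeasurableSpace Ω} [Fintype ι]
    (μ : Measure Ω) (T : Ω → ℝ) (Z : ι → Ω → ℝ) {F : Ω → ℝ} (hF : F ∈ addPreds μ Z) :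
    Var[T; μ] - Var[fun ω ↦ T ω - F ω; μ] ≤ Lr μ T Z := by
  have hbdd : BddBelow ((fun h ↦ Var[fun ω ↦ T ω - h ω; μ]) '' addPreds μ Z) :=
    ⟨0, by rintro _ ⟨h, -, rfl⟩; exact variance_nonneg _ μ⟩
  have hinf := csInf_le hbdd ⟨F, hF, rfl⟩
  rw [Lr]
  linarith

lemma cov_eq_covariance {Ω : Type*} {_ : MeasurableSpace Ω} (μ : Measure Ω) (f g : Ω → ℝ) :
    cov μ f g = cov[f, g; μ] := rfl

lemma variance_sub_add_eq {Ω : Type*} {_ : MeasurableSpace Ω} {μ : Measure Ω}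
    [IsFiniteMeasure μ] {T F G : Ω → ℝ} (hT : MemLp T 2 μ) (hF : MemLp F 2 μ)
    (hG : MemLp G 2 μ) :
    Var[fun ω ↦ T ω - (F ω + G ω); μ]
      = Var[fun ω ↦ T ω - F ω; μ] + Var[fun ω ↦ T ω - G ω; μ] - Var[T; μ]
        + 2 * cov[F, G; μ] := by
  rw [variance_fun_sub (Y := fun ω ↦ F ω + G ω) hT (hF.add hG), variance_fun_sub hT hF,
    variance_fun_sub hT hG, variance_fun_add hF hG, ← Pi.add_def, covariance_add_right hT hF hG]
  ring

theorem restricted_interaction_upper_bound_general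
    {Ω : Type*} {m0 : MeasurableSpace Ω} (μ : Measure Ω) [IsProbabilityMeasure μ]
    {n m : ℕ} (X : Fin n → Ω → ℝ) (Y : Fin m → Ω → ℝ)
    (T : Ω → ℝ) (hT : MemLp T 2 μ)
    (FX FY : Ω → ℝ) (hFX : FX ∈ addPreds μ X) (hFY : FY ∈ addPreds μ Y)
    (hmin : Lr μ T (Sum.elim X Y)
      = ProbabilityTheory.variance T μ
        - ProbabilityTheory.variance (fun ω => T ω - (FX ω + FY ω)) μ) :
    Lr μ T (Sum.elim X Y) - Lr μ T X - Lr μ T Y ≤ -2 * cov μ FX FY ∧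
    (0 ≤ cov μ FX FY → Lr μ T (Sum.elim X Y) - Lr μ T X - Lr μ T Y ≤ 0) := by
  have hFX2 := memLp_two_of_mem_addPreds hFX
  have hFY2 := memLp_two_of_mem_addPreds hFY
  have hjoint := variance_sub_add_eq hT hFX2 hFY2
  have hLX := variance_sub_variance_sub_le_Lr μ T X hFX
  have hLY := variance_sub_variance_sub_le_Lr μ T Y hFY
  rw [cov_eq_covariance]
  exact ⟨by linarith, fun _ ↦ by linarith⟩

/-- Upper bound on the restricted interaction: if the restricted conditional expectation
`E^r[T | X, Y]` decomposes as `F_X(X) + F_Y(Y)` with `F_X` additive in the `Xᵢ` and `F_Y`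
additive in the `Y_j` (i.e. `F_X + F_Y` attains the restricted minimum for the joint family),
then `W^r_T(X;Y) = L^r_T(X,Y) - L^r_T(X) - L^r_T(Y) ≤ -2 Cov(F_X, F_Y)`; in particular if
`Cov(F_X, F_Y) ≥ 0` then the interaction is non-positive. -/
theorem restricted_interaction_upper_bound
    {Ω : Type*} {m0 : MeasurableSpace Ω} (μ : Measure Ω) [IsProbabilityMeasure μ]
    {n m : ℕ} (X : Fin n → Ω → ℝ) (Y : Fin m → Ω → ℝ)
    (hX : ∀ i, Measurable (X i)) (hY : ∀ j, Measurable (Y j))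
    (T : Ω → ℝ) (hT : MemLp T 2 μ)
    (FX FY : Ω → ℝ) (hFX : FX ∈ addPreds μ X) (hFY : FY ∈ addPreds μ Y)
    (hmin : Lr μ T (Sum.elim X Y)
      = ProbabilityTheory.variance T μ
        - ProbabilityTheory.variance (fun ω => T ω - (FX ω + FY ω)) μ) :
    Lr μ T (Sum.elim X Y) - Lr μ T X - Lr μ T Y ≤ -2 * cov μ FX FY ∧
    (0 ≤ cov μ FX FY → Lr μ T (Sum.elim X Y) - Lr μ T X - Lr μ T Y ≤ 0) :=
  restricted_interaction_upper_bound_general (m0 := m0) μ X Y T hT FX FY hFX hFY hmin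
end
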